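/- If q̂ ≤ q̂' and p̂ ≥ p̂', then the deletion confidence satisfies ρ(q̂', p̂') ≤ ρ(q̂, p̂), where ρ(q, p) = 1 - Σ_{k=0}^{n} C(n,k)·p^k·(1-p)^{n-k}·H(Σ_{l=0}^{k} C(n,l)·q^l·(1-q)^{n-l} ≤ 1-α). -/

import Mathlib

open Finset

/-- The binomial probability mass `C(n,k) r^k (1-r)^(n-k)`. -/
noncomputable def binomTerm (n : ℕ) (r : ℝ) (k : ℕ) : ℝ :=
  (n.choose k : ℝ) * r ^ k * (1 - r) ^ (n - k)

/-- The binomial CDF `F_q(k) = Σ_{l=0}^{k} C(n,l) q^l (1-q)^(n-l)`. -/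
noncomputable def binomCDF (n : ℕ) (q : ℝ) (k : ℕ) : ℝ :=
  ∑ l ∈ Finset.range (k + 1), binomTerm n q l

/-- The Type-II error `β(p,q)` of the threshold test. -/
noncomputable def typeIIError (n : ℕ) (α p q : ℝ) : ℝ :=
  ∑ k ∈ Finset.range (n + 1),
    binomTerm n p k * (if binomCDF n q k ≤ 1 - α then 1 else 0)

open Polynomial

/-! Each value `F_q(k)` of the binomial CDF is antitone in `q`: as a sum of Bernstein polynomials
its derivative telescopes to `-n · C(n-1,k) q^k (1-q)^(n-1-k) ≤ 0`. Hence the rejection region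
`{k : F_q(k) ≤ 1 - α}` grows with `q`, so `β(p,q)` is monotone in `q`. For fixed `q` that region is
an initial segment `{k < m}`, because `F_q` is monotone in `k`, so `β(p,q)` is a value of the CDF
`F_p` (or `0`) and therefore antitone in `p`. -/

theorem binomTerm_eq_eval_bernsteinPolynomial (n : ℕ) (r : ℝ) (k : ℕ) :
    binomTerm n r k = (bernsteinPolynomial ℝ n k).eval r := by
  simp [binomTerm, bernsteinPolynomial]

theorem binomTerm_nonneg (n : ℕ) {r : ℝ} (h0 : 0 ≤ r) (h1 : r ≤ 1) (k : ℕ) :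
    0 ≤ binomTerm n r k := by
  have : 0 ≤ 1 - r := sub_nonneg.mpr h1
  unfold binomTerm
  positivity

theorem derivative_sum_range_bernsteinPolynomial (R : Type*) [CommRing R] (n k : ℕ) :
    derivative (∑ l ∈ range (k + 1), bernsteinPolynomial R n l) =
      -(n * bernsteinPolynomial R (n - 1) k) := by
  induction k with
  | zero => simp [bernsteinPolynomial.derivative_zero]
  | succ k ih =>
    rw [sum_range_succ, derivative_add, ih, bernsteinPolynomial.derivative_succ]
    ring

theorem binomCDF_antitoneOn (n k : ℕ) : AntitoneOn (fun q => binomCDF n q k) (Set.Icc 0 1) := by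
  set P := ∑ l ∈ range (k + 1), bernsteinPolynomial ℝ n l
  have hP : (fun q => binomCDF n q k) = fun q => P.eval q := by
    ext q
    simp [P, binomCDF, binomTerm_eq_eval_bernsteinPolynomial, eval_finsetSum]
  rw [hP]
  refine antitoneOn_of_deriv_nonpos (convex_Icc 0 1) P.continuous.continuousOn
    P.differentiable.differentiableOn fun q hq => ?_
  rw [interior_Icc] at hq
  rw [Polynomial.deriv, derivative_sum_range_bernsteinPolynomial, eval_neg, eval_mul, eval_natCast,
    ← binomTerm_eq_eval_bernsteinPolynomial, neg_nonpos]
  exact mul_nonneg n.cast_nonneg (binomTerm_nonneg (n - 1) hq.1.le hq.2.le k)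

theorem binomCDF_monotone (n : ℕ) {q : ℝ} (h0 : 0 ≤ q) (h1 : q ≤ 1) : Monotone (binomCDF n q) :=
  monotone_nat_of_le_succ fun k => by
    rw [binomCDF, binomCDF, sum_range_succ _ (k + 1)]
    exact le_add_of_nonneg_right (binomTerm_nonneg n h0 h1 _)

theorem exists_range_filter_eq_range {P : ℕ → Prop} [DecidablePred P]
    (hP : ∀ ⦃j k⦄, j ≤ k → P k → P j) (N : ℕ) : ∃ m, (range N).filter P = range m := by
  rcases IsLowerSet.eq_univ_or_Iio (s := {k | P k}) (fun k j hjk hk => hP hjk hk) with h | ⟨a, h⟩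
  · refine ⟨N, filter_true_of_mem fun k _ => ?_⟩
    simpa using Set.eq_univ_iff_forall.mp h k
  · refine ⟨min N a, ?_⟩
    ext k
    have := Set.ext_iff.mp h k
    simp only [Set.mem_ofPred_eq, Set.mem_Iio] at this
    simp [this]

theorem antitoneOn_sum_range_binomTerm (n m : ℕ) :
    AntitoneOn (fun p => ∑ k ∈ range m, binomTerm n p k) (Set.Icc 0 1) := by
  cases m with
  | zero => simp [antitoneOn_const]
  | succ k => exact binomCDF_antitoneOn n k

theorem typeIIError_eq_sum_filter (n : ℕ) (α p q : ℝ) :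
    typeIIError n α p q =
      ∑ k ∈ (range (n + 1)).filter (fun k => binomCDF n q k ≤ 1 - α), binomTerm n p k := by
  simp [typeIIError, sum_filter]

theorem typeIIError_antitoneOn_left (n : ℕ) (α : ℝ) {q : ℝ} (h0 : 0 ≤ q) (h1 : q ≤ 1) :
    AntitoneOn (fun p => typeIIError n α p q) (Set.Icc 0 1) := by
  obtain ⟨m, hm⟩ := exists_range_filter_eq_range
    (fun j k hjk hk => (binomCDF_monotone n h0 h1 hjk).trans hk) (n + 1)
  convert antitoneOn_sum_range_binomTerm n m using 2 with p
  rw [typeIIError_eq_sum_filter, hm]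

theorem typeIIError_monotoneOn_right (n : ℕ) (α : ℝ) {p : ℝ} (h0 : 0 ≤ p) (h1 : p ≤ 1) :
    MonotoneOn (typeIIError n α p) (Set.Icc 0 1) := fun q hq q' hq' hqq' =>
  sum_le_sum fun k _ => by
    have hF := binomCDF_antitoneOn n k hq hq' hqq'
    have := binomTerm_nonneg n h0 h1 k
    split_ifs with h h' h' <;> first | rfl | linarith

theorem deletionConfidence_bound_general (n : ℕ) (α : ℝ) (qh qh' ph ph' : ℝ)
    (hqh0 : 0 ≤ qh) (hqh'1 : qh' ≤ 1) (hph'0 : 0 ≤ ph') (hph1 : ph ≤ 1)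
    (hq : qh ≤ qh') (hp : ph' ≤ ph) :
    1 - typeIIError n α ph' qh' ≤ 1 - typeIIError n α ph qh := by
  have hqh : qh ∈ Set.Icc (0 : ℝ) 1 := ⟨hqh0, hq.trans hqh'1⟩
  have hqh' : qh' ∈ Set.Icc (0 : ℝ) 1 := ⟨hqh0.trans hq, hqh'1⟩
  have hph : ph ∈ Set.Icc (0 : ℝ) 1 := ⟨hph'0.trans hp, hph1⟩
  have hph' : ph' ∈ Set.Icc (0 : ℝ) 1 := ⟨hph'0, hp.trans hph1⟩
  gcongr 1 - ?_
  calc typeIIError n α ph qh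
      ≤ typeIIError n α ph' qh := typeIIError_antitoneOn_left n α hqh.1 hqh.2 hph' hph hp
    _ ≤ typeIIError n α ph' qh' := typeIIError_monotoneOn_right n α hph'.1 hph'.2 hqh hqh' hq

/-- Overestimating `q` and underestimating `p` lower-bounds the deletion confidence:
if `q̂ ≤ q̂'` and `p̂' ≤ p̂` then `ρ(q̂', p̂') ≤ ρ(q̂, p̂)`. -/
theorem deletionConfidence_bound (n : ℕ) (α : ℝ) (qh qh' ph ph' : ℝ)
    (hα0 : 0 ≤ α) (hα1 : α ≤ 1)
    (hqh0 : 0 ≤ qh) (hqh'1 : qh' ≤ 1) (hph'0 : 0 ≤ ph') (hph1 : ph ≤ 1)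
    (hq : qh ≤ qh') (hp : ph' ≤ ph) :
    1 - typeIIError n α ph' qh' ≤ 1 - typeIIError n α ph qh :=
  deletionConfidence_bound_general n α qh qh' ph ph' hqh0 hqh'1 hph'0 hph1 hq hp
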